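/- Let L ∈ {ALC, ALCI} and let E = (E⁺, E⁻) be a collection of labeled ABox-FullCQ examples in which all negative examples are consistent. Then the following are equivalent: (1) E admits a fitting L-ontology; (2) there is a completion C for E such that (a) for all consistent (A, q) ∈ E⁺: if h is a homomorphism from A to C and Q(a) ∈ q is a concept atom, then Q(h(a)) ∈ C; (b) for all (A, q) ∈ E⁻: there is a concept atom Q(a) ∈ q with Q(a) ∉ C; and (c) for all inconsistent (A, q) ∈ E⁺: there is no homomorphism from A to C. -/

import Mathlib

/-!
Formalization background for "Fitting Ontologies to ABox-Query Examples":
description logics ALC / ALCI / ALCQ, ABoxes, interpretations (with standard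
names assumption), ontologies, queries (AQ / CQ / full CQ / UCQ), fitting
problems, homomorphisms, forest models, unravelings, etc.
-/

namespace DLFit

/-- Roles: role names and inverse roles (both indexed by natural numbers). -/
inductive DLRole : Type
  | name (r : ℕ)
  | inv (r : ℕ)
deriving DecidableEq

/-- Concepts of ALCIQ, a common superlanguage of ALC, ALCI and ALCQ. -/
inductive Concept : Type
  | top
  | atom (A : ℕ)
  | neg (C : Concept)
  | inter (C D : Concept)
  | ex (r : DLRole) (C : Concept)
  | atLeast (n : ℕ) (r : DLRole) (C : Concept)
  | atMost (n : ℕ) (r : DLRole) (C : Concept)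
deriving DecidableEq

/-- A concept uses no inverse roles. -/
def Concept.invFree : Concept → Prop
  | .top => True
  | .atom _ => True
  | .neg C => C.invFree
  | .inter C D => C.invFree ∧ D.invFree
  | .ex r C => (∃ m, r = DLRole.name m) ∧ C.invFree
  | .atLeast _ r C => (∃ m, r = DLRole.name m) ∧ C.invFree
  | .atMost _ r C => (∃ m, r = DLRole.name m) ∧ C.invFree

/-- A concept uses no qualified number restrictions. -/
def Concept.countFree : Concept → Prop
  | .top => True
  | .atom _ => True
  | .neg C => C.countFree
  | .inter C D => C.countFree ∧ D.countFree
  | .ex _ C => C.countFree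
  | .atLeast _ _ _ => False
  | .atMost _ _ _ => False

/-- An ontology is a finite set of concept inclusions `C ⊑ D`. -/
abbrev Ontology := Finset (Concept × Concept)

/-- The two ontology languages considered: ALC and ALCI. -/
inductive DL : Type
  | alc
  | alci
deriving DecidableEq

/-- Membership of an ontology in ALC resp. ALCI. -/
def OntologyInLang : DL → Ontology → Prop
  | .alc, O => ∀ ci ∈ O, ci.1.invFree ∧ ci.1.countFree ∧ ci.2.invFree ∧ ci.2.countFree
  | .alci, O => ∀ ci ∈ O, ci.1.countFree ∧ ci.2.countFree

/-- An ALCQ-ontology: no inverse roles (number restrictions allowed). -/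
def OntologyIsALCQ (O : Ontology) : Prop := ∀ ci ∈ O, ci.1.invFree ∧ ci.2.invFree

/-- ABox assertions `A(a)` and `r(a,b)`. -/
inductive Assertion : Type
  | conc (A : ℕ) (a : ℕ)
  | role (r : ℕ) (a b : ℕ)
deriving DecidableEq

/-- An ABox is a finite set of assertions. -/
abbrev ABox := Finset Assertion

def AssertionInds : Assertion → Finset ℕ
  | .conc _ a => {a}
  | .role _ a b => {a, b}

/-- The individual names occurring in an ABox. -/
def ABoxInds (A : ABox) : Finset ℕ := A.biUnion AssertionInds

def AssertionCNs : Assertion → Finset ℕ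
  | .conc P _ => {P}
  | .role _ _ _ => ∅

/-- The concept names occurring in an ABox. -/
def ABoxCNs (A : ABox) : Finset ℕ := A.biUnion AssertionCNs

/-- An interpretation, with the standard names assumption: every individual
name denotes itself, i.e. the (injective) map `indI` embeds the individual
names into the domain. -/
structure Interp : Type 1 where
  Dom : Type
  indI : ℕ → Dom
  indI_inj : Function.Injective indI
  concI : ℕ → Set Dom
  roleI : ℕ → Set (Dom × Dom)

/-- Semantics of (possibly inverse) roles. -/
def Interp.rSem (I : Interp) : DLRole → Set (I.Dom × I.Dom)
  | .name r => I.roleI r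
  | .inv r => {p | (p.2, p.1) ∈ I.roleI r}

/-- Semantics of concepts. -/
def Interp.cSem (I : Interp) : Concept → Set I.Dom
  | .top => Set.univ
  | .atom A => I.concI A
  | .neg C => (I.cSem C)ᶜ
  | .inter C D => I.cSem C ∩ I.cSem D
  | .ex r C => {d | ∃ e, (d, e) ∈ I.rSem r ∧ e ∈ I.cSem C}
  | .atLeast n r C => {d | (n : ℕ∞) ≤ {e | (d, e) ∈ I.rSem r ∧ e ∈ I.cSem C}.encard}
  | .atMost n r C => {d | {e | (d, e) ∈ I.rSem r ∧ e ∈ I.cSem C}.encard ≤ (n : ℕ∞)}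

/-- `I` is a model of the ontology `O`. -/
def Interp.IsModelOf (I : Interp) (O : Ontology) : Prop :=
  ∀ ci ∈ O, I.cSem ci.1 ⊆ I.cSem ci.2

def Interp.SatAssertion (I : Interp) : Assertion → Prop
  | .conc P a => I.indI a ∈ I.concI P
  | .role r a b => (I.indI a, I.indI b) ∈ I.roleI r

/-- `I` is a model of the ABox `A` (individual names interpreted as themselves). -/
def Interp.SatABox (I : Interp) (A : ABox) : Prop := ∀ α ∈ A, I.SatAssertion α

/-- An ABox is consistent with an ontology if they have a common model. -/
def ConsistentWith (A : ABox) (O : Ontology) : Prop :=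
  ∃ I : Interp, I.IsModelOf O ∧ I.SatABox A

/-- Homomorphism between ABoxes (need not fix individual names). -/
def ABoxHom (h : ℕ → ℕ) (A B : ABox) : Prop :=
  (∀ P a, Assertion.conc P a ∈ A → Assertion.conc P (h a) ∈ B) ∧
  (∀ r a b, Assertion.role r a b ∈ A → Assertion.role r (h a) (h b) ∈ B)

/-- Homomorphism from an ABox into an interpretation. -/
def ABoxIHom (I : Interp) (h : ℕ → I.Dom) (A : ABox) : Prop :=
  (∀ P a, Assertion.conc P a ∈ A → h a ∈ I.concI P) ∧
  (∀ r a b, Assertion.role r a b ∈ A → (h a, h b) ∈ I.roleI r)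

/-- Local injectivity of a homomorphism on an ABox. -/
def LocInj {D : Type} (h : ℕ → D) (A : ABox) : Prop :=
  ∀ r a b c, Assertion.role r a b ∈ A → Assertion.role r a c ∈ A → h b = h c → b = c

/-- The ABoxes in a collection of examples have pairwise disjoint individual names. -/
def PairwiseDisjInds (S : Finset ABox) : Prop :=
  ∀ A ∈ S, ∀ B ∈ S, A ≠ B → Disjoint (ABoxInds A) (ABoxInds B)

/-! ## Queries -/

/-- Terms of a query: variables and individual names. -/
inductive Term : Type
  | var (x : ℕ)
  | ind (a : ℕ)
deriving DecidableEq

/-- Atoms of a query. -/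
inductive Atom : Type
  | catom (A : ℕ) (t : Term)
  | ratom (r : ℕ) (t t' : Term)
deriving DecidableEq

/-- A (Boolean) conjunctive query, viewed as its finite set of atoms;
all variables are (implicitly) existentially quantified. -/
abbrev CQ := Finset Atom

/-- A union of conjunctive queries. -/
abbrev UCQ := Finset CQ

def TermInds : Term → Finset ℕ
  | .var _ => ∅
  | .ind a => {a}

def AtomInds : Atom → Finset ℕ
  | .catom _ t => TermInds t
  | .ratom _ t t' => TermInds t ∪ TermInds t'

/-- Individual names occurring in a CQ. -/
def CQInds (q : CQ) : Finset ℕ := q.biUnion AtomInds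

def UCQInds (q : UCQ) : Finset ℕ := q.biUnion CQInds

def AtomCNs : Atom → Finset ℕ
  | .catom P _ => {P}
  | .ratom _ _ _ => ∅

/-- Concept names occurring in a CQ. -/
def CQCNs (q : CQ) : Finset ℕ := q.biUnion AtomCNs

def UCQCNs (q : UCQ) : Finset ℕ := q.biUnion CQCNs

def AtomGround : Atom → Prop
  | .catom _ t => ∃ a, t = Term.ind a
  | .ratom _ t t' => (∃ a, t = Term.ind a) ∧ (∃ a, t' = Term.ind a)

/-- A full CQ: no (existentially quantified) variables. -/
def CQIsFull (q : CQ) : Prop := ∀ α ∈ q, AtomGround α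

def TermEval (I : Interp) (v : ℕ → I.Dom) : Term → I.Dom
  | .var x => v x
  | .ind a => I.indI a

def Interp.SatAtom (I : Interp) (v : ℕ → I.Dom) : Atom → Prop
  | .catom P t => TermEval I v t ∈ I.concI P
  | .ratom r t t' => (TermEval I v t, TermEval I v t') ∈ I.roleI r

/-- `I ⊨ q` for a CQ `q`: there is a (strong) homomorphism of the atoms of `q`
into `I` that is the identity on individual names. -/
def Interp.SatCQ (I : Interp) (q : CQ) : Prop :=
  ∃ v : ℕ → I.Dom, ∀ α ∈ q, I.SatAtom v α

/-- `I ⊨ q` for a UCQ `q`: some disjunct is satisfied. -/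
def Interp.SatUCQ (I : Interp) (q : UCQ) : Prop := ∃ p ∈ q, I.SatCQ p

/-- `A ∪ O ⊨ Q(a)` for an atomic query. -/
def EntailsAQ (A : ABox) (O : Ontology) (Q a : ℕ) : Prop :=
  ∀ I : Interp, I.IsModelOf O → I.SatABox A → I.indI a ∈ I.concI Q

/-- `A ∪ O ⊨ q` for a CQ. -/
def EntailsCQ (A : ABox) (O : Ontology) (q : CQ) : Prop :=
  ∀ I : Interp, I.IsModelOf O → I.SatABox A → I.SatCQ q

/-- `A ∪ O ⊨ q` for a UCQ. -/
def EntailsUCQ (A : ABox) (O : Ontology) (q : UCQ) : Prop :=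
  ∀ I : Interp, I.IsModelOf O → I.SatABox A → I.SatUCQ q

/-! ## Examples and fitting -/

/-- An ABox-AQ example `(𝒜, Q(a))`. -/
abbrev AQEx := ABox × ℕ × ℕ

/-- An ABox-CQ (in particular, ABox-FullCQ) example `(𝒜, q)`. -/
abbrev CQEx := ABox × CQ

/-- An ABox-UCQ example `(𝒜, q)`. -/
abbrev UEx := ABox × UCQ

/-- `O` fits a collection of labeled ABox(-consistency) examples. -/
def FitsCons (O : Ontology) (Ep En : Finset ABox) : Prop :=
  (∀ A ∈ Ep, ConsistentWith A O) ∧ (∀ A ∈ En, ¬ ConsistentWith A O)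

/-- `O` fits a collection of labeled ABox-AQ examples. -/
def FitsAQ (O : Ontology) (Ep En : Finset AQEx) : Prop :=
  (∀ e ∈ Ep, EntailsAQ e.1 O e.2.1 e.2.2) ∧ (∀ e ∈ En, ¬ EntailsAQ e.1 O e.2.1 e.2.2)

/-- `O` fits a collection of labeled ABox-CQ examples. -/
def FitsCQ (O : Ontology) (Ep En : Finset CQEx) : Prop :=
  (∀ e ∈ Ep, EntailsCQ e.1 O e.2) ∧ (∀ e ∈ En, ¬ EntailsCQ e.1 O e.2)

/-- `O` fits a collection of labeled ABox-UCQ examples. -/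
def FitsUCQ (O : Ontology) (Ep En : Finset UEx) : Prop :=
  (∀ e ∈ Ep, EntailsUCQ e.1 O e.2) ∧ (∀ e ∈ En, ¬ EntailsUCQ e.1 O e.2)

/-- An example `(A, q)` is inconsistent if every ALCI-ontology `O` with
`A ∪ O ⊨ q` is inconsistent with `A`. -/
def InconsistentEx (A : ABox) (q : CQ) : Prop :=
  ∀ O : Ontology, OntologyInLang DL.alci O → EntailsCQ A O q → ¬ ConsistentWith A O

/-! ## Completions and refutation candidates -/

/-- The disjoint union `A⁻` of the ABoxes of the negative AQ examples
(the ABoxes of a collection have pairwise disjoint individual names, so the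
disjoint union is the plain union). -/
def NegUnionAQ (En : Finset AQEx) : ABox := En.sup Prod.fst

/-- The disjoint union `A⁻` of the ABoxes of the negative CQ examples. -/
def NegUnionCQ (En : Finset CQEx) : ABox := En.sup Prod.fst

/-- A completion for a collection of ABox-AQ examples: extends `A⁻` by concept
assertions `Q(b)` with `b ∈ ind(A⁻)` and `Q` occurring as an AQ in `E⁺`. -/
def IsCompletionAQ (Ep En : Finset AQEx) (C : ABox) : Prop :=
  NegUnionAQ En ⊆ C ∧
  ∀ α ∈ C, α ∈ NegUnionAQ En ∨
    ∃ Q b, α = Assertion.conc Q b ∧ b ∈ ABoxInds (NegUnionAQ En) ∧ ∃ e ∈ Ep, e.2.1 = Q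

/-- Refutation candidates for a collection of ABox-AQ examples. -/
inductive RefCandAQ (Ep : Finset AQEx) (base : ABox) : ABox → Prop
  | base : RefCandAQ Ep base base
  | step {C : ABox} {A : ABox} {Q a : ℕ} {h : ℕ → ℕ} :
      RefCandAQ Ep base C → (A, Q, a) ∈ Ep → ABoxHom h A C →
      RefCandAQ Ep base (insert (Assertion.conc Q (h a)) C)

/-- A completion for a collection of ABox-FullCQ examples: extends `A⁻` by
concept assertions `Q(b)` with `b ∈ ind(A⁻)` and `Q` occurring in a query of a
positive example. -/
def IsCompletionCQ (Ep En : Finset CQEx) (C : ABox) : Prop :=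
  NegUnionCQ En ⊆ C ∧
  ∀ α ∈ C, α ∈ NegUnionCQ En ∨
    ∃ Q b, α = Assertion.conc Q b ∧ b ∈ ABoxInds (NegUnionCQ En) ∧ ∃ e ∈ Ep, Q ∈ CQCNs e.2

/-- Refutation candidates for a collection of ABox-FullCQ examples. -/
inductive RefCandCQ (Ep : Finset CQEx) (base : ABox) : ABox → Prop
  | base : RefCandCQ Ep base base
  | step {C : ABox} {A : ABox} {q : CQ} {Q a : ℕ} {h : ℕ → ℕ} :
      RefCandCQ Ep base C → (A, q) ∈ Ep → ¬ InconsistentEx A q → ABoxHom h A C →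
      Atom.catom Q (Term.ind a) ∈ q →
      RefCandCQ Ep base (insert (Assertion.conc Q (h a)) C)

/-! ## Forest models, unravelings and `I_{A,h,L}` -/

/-- The edge relation of the graph of a forest model: some role edge, excluding
pairs of ABox individuals. -/
def ForestEdge (I : Interp) (A : ABox) (d e : I.Dom) : Prop :=
  (∃ r, (d, e) ∈ I.roleI r) ∧
  ¬ ∃ a ∈ ABoxInds A, ∃ b ∈ ABoxInds A, d = I.indI a ∧ e = I.indI b

/-- The undirected version of the graph of a forest model. -/
def ForestGraph (I : Interp) (A : ABox) : SimpleGraph I.Dom where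
  Adj d e := d ≠ e ∧ (ForestEdge I A d e ∨ ForestEdge I A e d)
  symm := ⟨fun _ _ h => ⟨h.1.symm, h.2.symm⟩⟩
  loopless := ⟨fun _ h => h.1 rfl⟩

/-- `I` is an `L`-forest model of the ABox `A`:
it is a model of `A`; role edges among ABox individuals are exactly those
asserted in `A`; and the remaining role edges form a forest (for ALC a
directed forest whose edges point away from the roots, for ALCI an
undirected forest). -/
def IsForestModel (L : DL) (I : Interp) (A : ABox) : Prop :=
  I.SatABox A ∧
  (∀ r a b, a ∈ ABoxInds A → b ∈ ABoxInds A →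
    ((I.indI a, I.indI b) ∈ I.roleI r ↔ Assertion.role r a b ∈ A)) ∧
  (match L with
    | DL.alc =>
        (∀ e : I.Dom, {d : I.Dom | ForestEdge I A d e}.Subsingleton) ∧
        WellFounded (fun d e : I.Dom => ForestEdge I A d e)
    | DL.alci =>
        (∀ d : I.Dom, ¬ ForestEdge I A d d) ∧ (ForestGraph I A).IsAcyclic)

/-- `e` is a neighbor of `d` in `I`. -/
def Neighbor (I : Interp) (d e : I.Dom) : Prop :=
  ∃ r, (d, e) ∈ I.roleI r ∨ (e, d) ∈ I.roleI r

/-- The degree of `I` (maximal number of neighbors) is at most `n`. -/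
def DegreeLE (I : Interp) (n : ℕ) : Prop :=
  ∀ d : I.Dom, ∃ s : Finset I.Dom, s.card ≤ n ∧ ∀ e : I.Dom, Neighbor I d e → e ∈ s

/-- The disjoint union of a family of interpretations (`pick` chooses, for
every individual name, the component interpreting it). -/
def Interp.disjUnion {ι : Type} (J : ι → Interp) (pick : ℕ → ι) : Interp where
  Dom := Σ i : ι, (J i).Dom
  indI := fun n => ⟨pick n, (J (pick n)).indI n⟩
  indI_inj := by
    intro m n hmn
    obtain ⟨h1, h2⟩ := Sigma.ext_iff.mp hmn
    dsimp only at h1 h2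
    rw [h1] at h2
    exact (J (pick n)).indI_inj (eq_of_heq h2)
  concI := fun P => {x | x.2 ∈ (J x.1).concI P}
  roleI := fun r => {p | ∃ (i : ι) (d e : (J i).Dom),
    p = (⟨i, d⟩, ⟨i, e⟩) ∧ (d, e) ∈ (J i).roleI r}

/-- `l` is a path in `I` starting at `d` (for `L = ALC`, only role names may
occur on the path; for `L = ALCI` also inverse roles). -/
def IsPathFrom (L : DL) (I : Interp) : I.Dom → List (DLRole × I.Dom) → Prop
  | _, [] => True
  | d, (r, e) :: l =>
      (d, e) ∈ I.rSem r ∧ (L = DL.alc → ∃ m, r = DLRole.name m) ∧ IsPathFrom L I e l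

/-- The tail (last element) of a path starting at `d`. -/
def PathTail (I : Interp) (d : I.Dom) (l : List (DLRole × I.Dom)) : I.Dom :=
  (l.getLast?).elim d Prod.snd

/-- Domain of `I_{A,h,L}`: individual names plus, for every individual name,
paths in `I` (elements not corresponding to `ind(A)` or to valid nonempty
paths are unlabeled and isolated junk). -/
abbrev IAhDom (I : Interp) : Type := ℕ ⊕ (ℕ × List (DLRole × I.Dom))

/-- The element of `I_{A,h,L}` given by the path `l` attached at individual
`a`; the root (empty path) is identified with `a` itself. -/
def IAhNode (I : Interp) (a : ℕ) : List (DLRole × I.Dom) → IAhDom I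
  | [] => Sum.inl a
  | l => Sum.inr (a, l)

/-- Validity of a path attached at `a` in `I_{A,h,L}`. -/
def IAhValid (L : DL) (I : Interp) (A : ABox) (h : ℕ → I.Dom)
    (a : ℕ) (l : List (DLRole × I.Dom)) : Prop :=
  a ∈ ABoxInds A ∧ IsPathFrom L I (h a) l

/-- The interpretation `I_{A,h,L}`: start from the interpretation with domain
`ind(A)`, concept memberships induced from `I` via `h`, and role edges exactly
the role assertions of `A`; then disjointly attach, for every `a ∈ ind(A)`,
the `L`-unraveling of `I` at `h(a)`, identifying its root with `a`. -/
def IAh (L : DL) (I : Interp) (A : ABox) (h : ℕ → I.Dom) : Interp where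
  Dom := IAhDom I
  indI := Sum.inl
  indI_inj := Sum.inl_injective
  concI := fun P => {x : IAhDom I |
    (∃ a, x = Sum.inl a ∧ a ∈ ABoxInds A ∧ h a ∈ I.concI P) ∨
    (∃ a l, x = Sum.inr (a, l) ∧ l ≠ [] ∧ IAhValid L I A h a l ∧
      PathTail I (h a) l ∈ I.concI P)}
  roleI := fun r => {p : IAhDom I × IAhDom I |
    (∃ a b, p.1 = Sum.inl a ∧ p.2 = Sum.inl b ∧ Assertion.role r a b ∈ A) ∨
    (∃ a l e, IAhValid L I A h a (l ++ [(DLRole.name r, e)]) ∧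
      p.1 = IAhNode I a l ∧ p.2 = IAhNode I a (l ++ [(DLRole.name r, e)])) ∨
    (∃ a l e, IAhValid L I A h a (l ++ [(DLRole.inv r, e)]) ∧
      p.1 = IAhNode I a (l ++ [(DLRole.inv r, e)]) ∧ p.2 = IAhNode I a l)}

/-- Restriction of an interpretation to the elements satisfying `P`
(elements outside `P` become unlabeled and isolated). -/
def Interp.restrictP (I : Interp) (P : I.Dom → Prop) : Interp where
  Dom := I.Dom
  indI := I.indI
  indI_inj := I.indI_inj
  concI := fun Q => {d | d ∈ I.concI Q ∧ P d}
  roleI := fun r => {p | p ∈ I.roleI r ∧ P p.1 ∧ P p.2}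

/-- Depth of elements of `I_{A,h,L}` (ABox individuals have depth 0). -/
def IAhDepthLE (I : Interp) (n : ℕ) : IAhDom I → Prop
  | Sum.inl _ => True
  | Sum.inr al => al.2.length ≤ n

/-! ## Sizes -/

/-- Size of a UCQ (number of atoms). -/
def UCQSize (q : UCQ) : ℕ := q.sum Finset.card

/-- Size of an ABox-UCQ example. -/
def UExSize (e : UEx) : ℕ := e.1.card + UCQSize e.2

/-- Size `||E||` of a collection of ABox-UCQ examples. -/
def ESize (Ep En : Finset UEx) : ℕ := Ep.sum UExSize + En.sum UExSize

/-- The (exponential) bound `bound(E)` on the degree: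
`||E⁻||` plus the sum over positive examples `(A,q)` of `(||(A,q)||+1)^{||q||}`. -/
def EBound (Ep En : Finset UEx) : ℕ :=
  En.sum UExSize + Ep.sum (fun e => (UExSize e + 1) ^ UCQSize e.2)

/-! ## Connectivity, components, variations -/

def ABoxAdj (A : ABox) (a b : ℕ) : Prop :=
  ∃ r, Assertion.role r a b ∈ A ∨ Assertion.role r b a ∈ A

/-- Connectivity of individuals in an ABox. -/
def ABoxConn (A : ABox) : ℕ → ℕ → Prop := Relation.ReflTransGen (ABoxAdj A)

/-- `B` is a maximally connected component of the ABox `A`. -/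
def IsComponent (B A : ABox) : Prop :=
  ∃ a ∈ ABoxInds A, ∀ α : Assertion,
    α ∈ B ↔ α ∈ A ∧ ∀ c ∈ AssertionInds α, ABoxConn A a c

def AtomTerms : Atom → Finset Term
  | .catom _ t => {t}
  | .ratom _ t t' => {t, t'}

/-- The terms (variables and individuals) occurring in a CQ. -/
def CQTerms (q : CQ) : Finset Term := q.biUnion AtomTerms

def CQAdj (q : CQ) (t t' : Term) : Prop :=
  ∃ r, Atom.ratom r t t' ∈ q ∨ Atom.ratom r t' t ∈ q

/-- A CQ is connected. -/
def CQConnected (q : CQ) : Prop :=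
  ∀ t ∈ CQTerms q, ∀ t' ∈ CQTerms q, Relation.ReflTransGen (CQAdj q) t t'

def SubstTerm (σ : ℕ → Term) : Term → Term
  | .var x => σ x
  | .ind a => Term.ind a

def SubstAtom (σ : ℕ → Term) : Atom → Atom
  | .catom P t => Atom.catom P (SubstTerm σ t)
  | .ratom r t t' => Atom.ratom r (SubstTerm σ t) (SubstTerm σ t')

/-- An `A`-variation of a CQ `p`: consistently replace zero or more variables by
individual names from `ind(A)` and possibly identify variables. -/
def IsVariation (A : ABox) (p p' : CQ) : Prop :=
  ∃ σ : ℕ → Term,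
    (∀ x : ℕ, (∃ y, σ x = Term.var y) ∨ ∃ a ∈ ABoxInds A, σ x = Term.ind a) ∧
    p' = p.image (SubstAtom σ)

def Assertion.toAtom : Assertion → Atom
  | .conc P a => Atom.catom P (Term.ind a)
  | .role r a b => Atom.ratom r (Term.ind a) (Term.ind b)

/-- The interpretation `I_q` induced by a CQ. -/
def CQInterp (p : CQ) : Interp where
  Dom := Term
  indI := Term.ind
  indI_inj := fun _ _ hab => Term.ind.inj hab
  concI := fun P => {t | Atom.catom P t ∈ p}
  roleI := fun r => {tt | Atom.ratom r tt.1 tt.2 ∈ p}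

/-- A proper `A`-variation. -/
def IsProperVariation (L : DL) (A : ABox) (p p' : CQ) : Prop :=
  IsVariation A p p' ∧
  (∀ r a b, Atom.ratom r (Term.ind a) (Term.ind b) ∈ p' → Assertion.role r a b ∈ A) ∧
  IsForestModel L (CQInterp p') (A.filter fun α => α.toAtom ∈ p')

/-- A weak homomorphism from a CQ into an interpretation (need not be the
identity on individual names). -/
def WeakHom (I : Interp) (g : Term → I.Dom) (p : CQ) : Prop :=
  (∀ P t, Atom.catom P t ∈ p → g t ∈ I.concI P) ∧
  (∀ r t t', Atom.ratom r t t' ∈ p → (g t, g t') ∈ I.roleI r)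

def ReachStep (L : DL) (I : Interp) (d e : I.Dom) : Prop :=
  match L with
  | DL.alc => ∃ r, (d, e) ∈ I.roleI r
  | DL.alci => ∃ r, (d, e) ∈ I.roleI r ∨ (e, d) ∈ I.roleI r

/-- `L`-reachability in an interpretation. -/
def Reach (L : DL) (I : Interp) : I.Dom → I.Dom → Prop :=
  Relation.ReflTransGen (ReachStep L I)

/-- Compatibility of a weak homomorphism `g` (from `p'` to `I`) with a
homomorphism `h` (from `A` to `I`). -/
def CompatibleWith (L : DL) (I : Interp) (A : ABox) (h : ℕ → I.Dom)
    (p' : CQ) (g : Term → I.Dom) : Prop :=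
  (∀ a ∈ CQInds p', g (Term.ind a) = h a) ∧
  (∀ x : ℕ, Term.var x ∈ CQTerms p' →
    ∃ a ∈ ABoxInds A, Reach L I (h a) (g (Term.var x)))

/-- Query classes. -/
inductive QClass : Type
  | aq
  | fullcq
  | cq
  | ucq

/-- A UCQ belongs to a query class. -/
def UCQInClass : QClass → UCQ → Prop
  | .aq, q => ∃ Q a, q = {({Atom.catom Q (Term.ind a)} : CQ)}
  | .fullcq, q => ∃ p : CQ, q = {p} ∧ CQIsFull p
  | .cq, q => ∃ p : CQ, q = {p}
  | .ucq, _ => True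


/-!
If `O` fits, complete `A⁻` by all assertions `Q(b)` that `A⁻ ∪ O` entails. Entailment of
concept assertions and consistency transfer along ABox homomorphisms, because models of an
ALCI-ontology pull back along bounded morphisms; this gives (a) and (c). For (b), a
countermodel of a negative example is combined, by disjoint union, with models of the other
negative ABoxes into a model of `A⁻ ∪ O` that still refutes a concept atom of the query (role
atoms cannot fail: in a consistent example they are asserted, since otherwise doubling a model
would remove the edge).

Conversely, the ALC-ontology `completionOntology C` makes every element carry the marker `M_b`
of an individual `b` of `C` and forces marked elements to look like `b`, so every model of it
and of an ABox `A` induces a homomorphism `A → C`; with (a) and (c) this yields the positive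
examples. The completion `C` itself, with the markers added, is a model refuting the negative
examples by (b).
-/

lemma mem_aboxInds_of_conc {A : ABox} {P a : ℕ} (h : Assertion.conc P a ∈ A) :
    a ∈ ABoxInds A :=
  Finset.mem_biUnion.mpr ⟨_, h, by simp [AssertionInds]⟩

lemma mem_aboxInds_of_role_left {A : ABox} {r a b : ℕ} (h : Assertion.role r a b ∈ A) :
    a ∈ ABoxInds A :=
  Finset.mem_biUnion.mpr ⟨_, h, by simp [AssertionInds]⟩

lemma mem_aboxInds_of_role_right {A : ABox} {r a b : ℕ} (h : Assertion.role r a b ∈ A) :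
    b ∈ ABoxInds A :=
  Finset.mem_biUnion.mpr ⟨_, h, by simp [AssertionInds]⟩

lemma eq_empty_of_aboxInds_eq_empty {A : ABox} (hA : ABoxInds A = ∅) : A = ∅ := by
  refine Finset.eq_empty_of_forall_notMem fun α hα => ?_
  cases α with
  | conc P a => simpa [hA] using mem_aboxInds_of_conc hα
  | role r a b => simpa [hA] using mem_aboxInds_of_role_left hα

lemma mem_aboxCNs_of_conc {A : ABox} {P a : ℕ} (h : Assertion.conc P a ∈ A) :
    P ∈ ABoxCNs A :=
  Finset.mem_biUnion.mpr ⟨_, h, by simp [AssertionCNs]⟩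

lemma mem_cqInds_of_catom {q : CQ} {Q b : ℕ} (h : Atom.catom Q (Term.ind b) ∈ q) :
    b ∈ CQInds q :=
  Finset.mem_biUnion.mpr ⟨_, h, by simp [AtomInds, TermInds]⟩

lemma mem_cqCNs_of_catom {q : CQ} {Q : ℕ} {t : Term} (h : Atom.catom Q t ∈ q) :
    Q ∈ CQCNs q :=
  Finset.mem_biUnion.mpr ⟨_, h, by simp [AtomCNs]⟩

lemma eq_empty_of_cqInds_eq_empty {q : CQ} (hfull : CQIsFull q) (hq : CQInds q = ∅) :
    q = ∅ := by
  refine Finset.eq_empty_of_forall_notMem fun α hα => ?_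
  have hsub : AtomInds α ⊆ CQInds q := Finset.subset_biUnion_of_mem AtomInds hα
  cases α with
  | catom Q t =>
      obtain ⟨a, rfl⟩ := hfull _ hα
      simp [hq, AtomInds, TermInds] at hsub
  | ratom r t t' =>
      obtain ⟨⟨a, rfl⟩, -⟩ := hfull _ hα
      simp [hq, AtomInds, TermInds] at hsub

lemma ABoxHom.mem_aboxInds {h : ℕ → ℕ} {A B : ABox} (hh : ABoxHom h A B) {a : ℕ}
    (ha : a ∈ ABoxInds A) : h a ∈ ABoxInds B := by
  obtain ⟨α, hαA, haα⟩ := Finset.mem_biUnion.mp ha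
  cases α with
  | conc P c =>
      obtain rfl : a = c := by simpa [AssertionInds] using haα
      exact mem_aboxInds_of_conc (hh.1 _ _ hαA)
  | role r c c' =>
      rcases (by simpa [AssertionInds] using haα : a = c ∨ a = c') with rfl | rfl
      · exact mem_aboxInds_of_role_left (hh.2 _ _ _ hαA)
      · exact mem_aboxInds_of_role_right (hh.2 _ _ _ hαA)

lemma Interp.satCQ_of_full {I : Interp} {q : CQ} (hfull : CQIsFull q)
    (hconc : ∀ Q a, Atom.catom Q (Term.ind a) ∈ q → I.indI a ∈ I.concI Q)
    (hrole : ∀ r a b, Atom.ratom r (Term.ind a) (Term.ind b) ∈ q →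
      (I.indI a, I.indI b) ∈ I.roleI r) :
    I.SatCQ q := by
  refine ⟨fun _ => I.indI 0, fun α hα => ?_⟩
  cases α with
  | catom Q t =>
      obtain ⟨a, rfl⟩ := hfull _ hα
      exact hconc Q a hα
  | ratom r t t' =>
      obtain ⟨⟨a, rfl⟩, ⟨b, rfl⟩⟩ := hfull _ hα
      exact hrole r a b hα

lemma Interp.SatCQ.conc {I : Interp} {q : CQ} (hq : I.SatCQ q) {Q a : ℕ}
    (hQa : Atom.catom Q (Term.ind a) ∈ q) : I.indI a ∈ I.concI Q := by
  obtain ⟨v, hv⟩ := hq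
  exact hv _ hQa

lemma Interp.isModelOf_union {I : Interp} {O O' : Ontology} :
    I.IsModelOf (O ∪ O') ↔ I.IsModelOf O ∧ I.IsModelOf O' := by
  simp only [Interp.IsModelOf, Finset.mem_union, or_imp, forall_and]

lemma Interp.isModelOf_image {α : Type} {I : Interp} {s : Finset α} {f : α → Concept × Concept} :
    I.IsModelOf (s.image f) ↔ ∀ x ∈ s, I.cSem (f x).1 ⊆ I.cSem (f x).2 := by
  simp [Interp.IsModelOf]

lemma Interp.isModelOf_singleton {I : Interp} {ci : Concept × Concept} :
    I.IsModelOf {ci} ↔ I.cSem ci.1 ⊆ I.cSem ci.2 := by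
  simp [Interp.IsModelOf]

lemma OntologyInLang.alci {L : DL} {O : Ontology} (h : OntologyInLang L O) :
    OntologyInLang DL.alci O := by
  cases L with
  | alc => exact fun ci hci => ⟨(h ci hci).2.1, (h ci hci).2.2.2⟩
  | alci => exact h

/-! ## Bounded morphisms -/

structure Interp.IsBoundedMorphism (J I : Interp) (f : J.Dom → I.Dom) : Prop where
  mem_concI : ∀ P x, x ∈ J.concI P ↔ f x ∈ I.concI P
  map_roleI : ∀ r x y, (x, y) ∈ J.roleI r → (f x, f y) ∈ I.roleI r
  back_succ : ∀ r x e, (f x, e) ∈ I.roleI r → ∃ y, f y = e ∧ (x, y) ∈ J.roleI r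
  back_pred : ∀ r x e, (e, f x) ∈ I.roleI r → ∃ y, f y = e ∧ (y, x) ∈ J.roleI r

namespace Interp.IsBoundedMorphism

variable {J I : Interp} {f : J.Dom → I.Dom}

lemma mem_cSem_iff (hf : J.IsBoundedMorphism I f) {C : Concept} (hC : C.countFree)
    (x : J.Dom) : x ∈ J.cSem C ↔ f x ∈ I.cSem C := by
  induction C generalizing x with
  | top => simp [Interp.cSem]
  | atom P => exact hf.mem_concI P x
  | neg C ih => exact not_congr (ih hC x)
  | inter C D ihC ihD => exact and_congr (ihC hC.1 x) (ihD hC.2 x)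
  | ex r C ih =>
      simp only [Interp.cSem, Set.mem_ofPred_eq]
      constructor
      · rintro ⟨y, hxy, hy⟩
        refine ⟨f y, ?_, (ih hC y).mp hy⟩
        cases r with
        | name m => exact hf.map_roleI m x y hxy
        | inv m => exact hf.map_roleI m y x hxy
      · rintro ⟨e, hxe, he⟩
        cases r with
        | name m =>
            obtain ⟨y, rfl, hy⟩ := hf.back_succ m x e hxe
            exact ⟨y, hy, (ih hC y).mpr he⟩
        | inv m =>
            obtain ⟨y, rfl, hy⟩ := hf.back_pred m x e hxe
            exact ⟨y, hy, (ih hC y).mpr he⟩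
  | atLeast => exact hC.elim
  | atMost => exact hC.elim

lemma isModelOf (hf : J.IsBoundedMorphism I f) {O : Ontology}
    (hO : OntologyInLang DL.alci O) (hI : I.IsModelOf O) : J.IsModelOf O :=
  fun ci hci x hx => (hf.mem_cSem_iff (hO ci hci).2 x).mpr
    (hI ci hci ((hf.mem_cSem_iff (hO ci hci).1 x).mp hx))

end Interp.IsBoundedMorphism

lemma Interp.isModelOf_of_boundedMorphisms {ι : Type} {I : Interp} {J : ι → Interp}
    {f : ∀ i, (J i).Dom → I.Dom} (hf : ∀ i, (J i).IsBoundedMorphism I (f i))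
    (hsurj : ∀ x, ∃ i y, f i y = x) {O : Ontology} (hO : OntologyInLang DL.alci O)
    (hJ : ∀ i, (J i).IsModelOf O) : I.IsModelOf O := by
  intro ci hci x hx
  obtain ⟨i, y, rfl⟩ := hsurj x
  exact ((hf i).mem_cSem_iff (hO ci hci).2 y).mp
    (hJ i ci hci (((hf i).mem_cSem_iff (hO ci hci).1 y).mpr hx))

/-- A copy of `I` in which the individual name `a` is a fresh element behaving like `g a`
(with standard names, `I` itself cannot rename its individuals). -/
def Interp.withNames (I : Interp) (g : ℕ → I.Dom) : Interp where
  Dom := ℕ ⊕ I.Dom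
  indI := Sum.inl
  indI_inj := Sum.inl_injective
  concI P := Sum.elim g id ⁻¹' I.concI P
  roleI r := Prod.map (Sum.elim g id) (Sum.elim g id) ⁻¹' I.roleI r

lemma Interp.isBoundedMorphism_withNames (I : Interp) (g : ℕ → I.Dom) :
    (I.withNames g).IsBoundedMorphism I (Sum.elim g id) where
  mem_concI _ _ := Iff.rfl
  map_roleI _ _ _ h := h
  back_succ _ _ e h := ⟨Sum.inr e, rfl, h⟩
  back_pred _ _ e h := ⟨Sum.inr e, rfl, h⟩

lemma Interp.satABox_withNames_of_hom {I : Interp} {h : ℕ → ℕ} {A B : ABox}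
    (hh : ABoxHom h A B) (hB : I.SatABox B) : (I.withNames (I.indI ∘ h)).SatABox A := by
  intro α hα
  cases α with
  | conc P a => exact hB _ (hh.1 P a hα)
  | role r a b => exact hB _ (hh.2 r a b hα)

lemma ConsistentWith.of_hom {A B : ABox} {O : Ontology} (hO : OntologyInLang DL.alci O)
    (hB : ConsistentWith B O) {h : ℕ → ℕ} (hh : ABoxHom h A B) : ConsistentWith A O := by
  obtain ⟨I, hIO, hIB⟩ := hB
  exact ⟨_, (I.isBoundedMorphism_withNames _).isModelOf hO hIO,
    Interp.satABox_withNames_of_hom hh hIB⟩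

lemma EntailsAQ.of_hom {A B : ABox} {O : Ontology} (hO : OntologyInLang DL.alci O)
    {Q b : ℕ} (hent : EntailsAQ A O Q b) {h : ℕ → ℕ} (hh : ABoxHom h A B) :
    EntailsAQ B O Q (h b) :=
  fun I hIO hIB => hent _ ((I.isBoundedMorphism_withNames _).isModelOf hO hIO)
    (Interp.satABox_withNames_of_hom hh hIB)

/-- Two copies of `I` in which the `r₀`-edges from `a₀` to `b₀` run across the copies;
the individual names live in the copy `true`, where the edge `r₀(a₀, b₀)` is thus missing. -/
def Interp.twoCopiesCrossing (I : Interp) (r₀ : ℕ) (a₀ b₀ : I.Dom) : Interp where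
  Dom := I.Dom × Bool
  indI n := (I.indI n, true)
  indI_inj _ _ h := I.indI_inj (congrArg Prod.fst h)
  concI P := {x | x.1 ∈ I.concI P}
  roleI r := {p | (p.1.1, p.2.1) ∈ I.roleI r ∧
    ¬ (r = r₀ ∧ p.1.1 = a₀ ∧ p.2.1 = b₀ ∧ p.1.2 = p.2.2)}

lemma Interp.isBoundedMorphism_twoCopiesCrossing (I : Interp) (r₀ : ℕ) (a₀ b₀ : I.Dom) :
    (I.twoCopiesCrossing r₀ a₀ b₀).IsBoundedMorphism I Prod.fst where
  mem_concI _ _ := Iff.rfl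
  map_roleI _ _ _ h := h.1
  back_succ r x e h := by
    by_cases hcross : r = r₀ ∧ x.1 = a₀ ∧ e = b₀
    · exact ⟨(e, !x.2), rfl, h, by simp [hcross.1, hcross.2.1, hcross.2.2]⟩
    · exact ⟨(e, x.2), rfl, h, fun hc => hcross ⟨hc.1, hc.2.1, hc.2.2.1⟩⟩
  back_pred r x e h := by
    by_cases hcross : r = r₀ ∧ e = a₀ ∧ x.1 = b₀
    · exact ⟨(e, !x.2), rfl, h, by simp [hcross.1, hcross.2.1, hcross.2.2]⟩
    · exact ⟨(e, x.2), rfl, h, fun hc => hcross ⟨hc.1, hc.2.1, hc.2.2.1⟩⟩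

lemma role_mem_of_not_inconsistentEx {A : ABox} {q : CQ} (hq : ¬ InconsistentEx A q)
    {r a b : ℕ} (hrab : Atom.ratom r (Term.ind a) (Term.ind b) ∈ q) :
    Assertion.role r a b ∈ A := by
  by_contra hnot
  simp only [InconsistentEx, not_forall, not_not] at hq
  obtain ⟨O, hO, hent, I, hIO, hIA⟩ := hq
  set J := I.twoCopiesCrossing r (I.indI a) (I.indI b)
  have hJA : J.SatABox A := by
    intro α hα
    cases α with
    | conc P c => exact hIA _ hα
    | role r' c c' =>
        refine ⟨hIA _ hα, ?_⟩
        rintro ⟨rfl, hc, hc', -⟩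
        exact hnot (by rwa [I.indI_inj hc, I.indI_inj hc'] at hα)
  obtain ⟨v, hv⟩ := hent J ((I.isBoundedMorphism_twoCopiesCrossing _ _ _).isModelOf hO hIO) hJA
  exact (hv _ hrab).2 ⟨rfl, rfl, rfl, rfl⟩

lemma exists_conc_not_mem_of_not_satCQ {A : ABox} {q : CQ} (hq : ¬ InconsistentEx A q)
    (hfull : CQIsFull q) {I : Interp} (hIA : I.SatABox A) (hIq : ¬ I.SatCQ q) :
    ∃ Q a, Atom.catom Q (Term.ind a) ∈ q ∧ I.indI a ∉ I.concI Q := by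
  by_contra! hconc
  exact hIq (I.satCQ_of_full hfull hconc fun r a b hrab =>
    hIA _ (role_mem_of_not_inconsistentEx hq hrab))

lemma not_inconsistentEx_of_aboxInds_eq_empty {A : ABox} {q : CQ} (hfull : CQIsFull q)
    (hq : CQInds q ⊆ ABoxInds A) (hA : ABoxInds A = ∅) : ¬ InconsistentEx A q := by
  obtain rfl := eq_empty_of_aboxInds_eq_empty hA
  obtain rfl := eq_empty_of_cqInds_eq_empty hfull (Finset.subset_empty.mp (hA ▸ hq))
  intro hinc
  refine hinc ∅ (by simp [OntologyInLang]) (fun I _ _ => ⟨fun _ => I.indI 0, by simp⟩) ?_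
  exact ⟨⟨ℕ, id, fun _ _ h => h, fun _ => ∅, fun _ => ∅⟩, by simp [Interp.IsModelOf],
    by simp [Interp.SatABox]⟩

/-! ## Disjoint unions -/

lemma Interp.isBoundedMorphism_sigmaMk {ι : Type} (J : ι → Interp) (pick : ℕ → ι) (i : ι) :
    (J i).IsBoundedMorphism (Interp.disjUnion J pick) (Sigma.mk (β := fun i => (J i).Dom) i) where
  mem_concI _ _ := Iff.rfl
  map_roleI _ x y h := ⟨i, x, y, rfl, h⟩
  back_succ _ x _ := by
    rintro ⟨i', d, e, heq, hde⟩
    obtain ⟨h1, rfl⟩ := Prod.mk.inj heq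
    obtain ⟨rfl, h⟩ := Sigma.mk.inj h1
    cases h
    exact ⟨e, rfl, hde⟩
  back_pred _ x _ := by
    rintro ⟨i', d, e, heq, hde⟩
    obtain ⟨rfl, h2⟩ := Prod.mk.inj heq
    obtain ⟨rfl, h⟩ := Sigma.mk.inj h2
    cases h
    exact ⟨d, rfl, hde⟩

lemma Interp.disjUnion_isModelOf {ι : Type} {J : ι → Interp} (pick : ℕ → ι) {O : Ontology}
    (hO : OntologyInLang DL.alci O) (hJ : ∀ i, (J i).IsModelOf O) :
    (Interp.disjUnion J pick).IsModelOf O :=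
  Interp.isModelOf_of_boundedMorphisms (Interp.isBoundedMorphism_sigmaMk J pick)
    (fun ⟨i, y⟩ => ⟨i, y, rfl⟩) hO hJ

lemma Interp.disjUnion_satABox {ι : Type} {J : ι → Interp} {pick : ℕ → ι} {A : ABox} {i : ι}
    (hpick : ∀ a ∈ ABoxInds A, pick a = i) (hA : (J i).SatABox A) :
    (Interp.disjUnion J pick).SatABox A := by
  intro α hα
  cases α with
  | conc P a =>
      show (J (pick a)).indI a ∈ (J (pick a)).concI P
      rw [hpick a (mem_aboxInds_of_conc hα)]
      exact hA _ hα
  | role r a b =>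
      refine ⟨i, (J i).indI a, (J i).indI b, ?_, hA _ hα⟩
      show ((⟨pick a, _⟩ : Σ i, (J i).Dom), (⟨pick b, _⟩ : Σ i, (J i).Dom)) = _
      rw [hpick a (mem_aboxInds_of_role_left hα), hpick b (mem_aboxInds_of_role_right hα)]

lemma exists_model_sup_of_pairwiseDisjInds {S : Finset ABox} (hS : PairwiseDisjInds S)
    {O : Ontology} (hO : OntologyInLang DL.alci O) (hcons : ∀ B ∈ S, ConsistentWith B O)
    {B₀ : ABox} (hB₀ : B₀ ∈ S) {I : Interp} (hIO : I.IsModelOf O) (hIB₀ : I.SatABox B₀) :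
    ∃ K : Interp, K.IsModelOf O ∧ K.SatABox (S.sup id) ∧
      ∀ a ∈ ABoxInds B₀, ∀ Q, K.indI a ∈ K.concI Q ↔ I.indI a ∈ I.concI Q := by
  classical
  let J : {B // B ∈ S} → Interp := fun B =>
    if B.1 = B₀ then I else Classical.choose (hcons B.1 B.2)
  have hJ : ∀ B, (J B).IsModelOf O ∧ (J B).SatABox B.1 := by
    intro B
    by_cases hB : B.1 = B₀
    · simp only [J, if_pos hB]
      exact ⟨hIO, hB ▸ hIB₀⟩
    · simp only [J, if_neg hB]
      exact Classical.choose_spec (hcons B.1 B.2)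
  let pick : ℕ → {B // B ∈ S} := fun a =>
    if h : ∃ B : {B // B ∈ S}, a ∈ ABoxInds B.1 then h.choose else ⟨B₀, hB₀⟩
  have hpick : ∀ (B : {B // B ∈ S}), ∀ a ∈ ABoxInds B.1, pick a = B := by
    intro B a ha
    have hex : ∃ B : {B // B ∈ S}, a ∈ ABoxInds B.1 := ⟨B, ha⟩
    simp only [pick, dif_pos hex]
    by_contra hne
    exact Finset.disjoint_left.mp (hS _ hex.choose.2 _ B.2 (fun h => hne (Subtype.ext h)))
      hex.choose_spec ha
  refine ⟨Interp.disjUnion J pick, Interp.disjUnion_isModelOf pick hO fun B => (hJ B).1,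
    ?_, fun a ha Q => ?_⟩
  · intro α hα
    obtain ⟨B, hB, hαB⟩ := Finset.mem_sup.mp hα
    exact Interp.disjUnion_satABox (hpick ⟨B, hB⟩) (hJ ⟨B, hB⟩).2 α hαB
  · show (J (pick a)).indI a ∈ (J (pick a)).concI Q ↔ _
    have hJ₀ : J ⟨B₀, hB₀⟩ = I := if_pos rfl
    rw [hpick ⟨B₀, hB₀⟩ a ha, hJ₀]

/-! ## From a fitting ontology to a completion -/

lemma PairwiseDisjInds.mono {S T : Finset ABox} (hT : PairwiseDisjInds T) (hST : S ⊆ T) :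
    PairwiseDisjInds S :=
  fun A hA B hB => hT A (hST hA) B (hST hB)

lemma sup_image_fst_eq_negUnionCQ (En : Finset CQEx) :
    (En.image Prod.fst).sup id = NegUnionCQ En := by
  rw [NegUnionCQ, Finset.sup_image]
  rfl

lemma ConsistentWith.of_not_entailsCQ {A : ABox} {O : Ontology} {q : CQ}
    (h : ¬ EntailsCQ A O q) : ConsistentWith A O := by
  simp only [EntailsCQ, not_forall] at h
  obtain ⟨I, hIO, hIA, -⟩ := h
  exact ⟨I, hIO, hIA⟩

lemma IsCompletionCQ.aboxInds_subset {Ep En : Finset CQEx} {C : ABox}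
    (hC : IsCompletionCQ Ep En C) : ABoxInds C ⊆ ABoxInds (NegUnionCQ En) := by
  intro a ha
  obtain ⟨α, hαC, haα⟩ := Finset.mem_biUnion.mp ha
  rcases hC.2 α hαC with hα | ⟨Q, b, rfl, hb, -⟩
  · exact Finset.mem_biUnion.mpr ⟨α, hα, haα⟩
  · obtain rfl : a = b := by simpa [AssertionInds] using haα
    exact hb

/-- A completion `C` satisfying conditions (a), (b) and (c). -/
def IsFittingCompletion (Ep En : Finset CQEx) (C : ABox) : Prop :=
  IsCompletionCQ Ep En C ∧
    (∀ e ∈ Ep, ¬ InconsistentEx e.1 e.2 →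
      ∀ h : ℕ → ℕ, ABoxHom h e.1 C →
        ∀ Q b, Atom.catom Q (Term.ind b) ∈ e.2 →
          Assertion.conc Q (h b) ∈ C) ∧
    (∀ e ∈ En, ∃ Q b, Atom.catom Q (Term.ind b) ∈ e.2 ∧
      Assertion.conc Q b ∉ C) ∧
    (∀ e ∈ Ep, InconsistentEx e.1 e.2 → ¬ ∃ h : ℕ → ℕ, ABoxHom h e.1 C)

section EntailedCompletion

variable {Ep En : Finset CQEx} {O : Ontology}

open scoped Classical in
noncomputable def entailedCompletion (Ep En : Finset CQEx) (O : Ontology) : ABox :=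
  NegUnionCQ En ∪
    (((Ep.biUnion fun e => CQCNs e.2) ×ˢ ABoxInds (NegUnionCQ En)).filter
      fun p => EntailsAQ (NegUnionCQ En) O p.1 p.2).image fun p => Assertion.conc p.1 p.2

lemma mem_entailedCompletion {α : Assertion} :
    α ∈ entailedCompletion Ep En O ↔ α ∈ NegUnionCQ En ∨
      ∃ Q b, α = Assertion.conc Q b ∧ (∃ e ∈ Ep, Q ∈ CQCNs e.2) ∧
        b ∈ ABoxInds (NegUnionCQ En) ∧ EntailsAQ (NegUnionCQ En) O Q b := by
  simp only [entailedCompletion, Finset.mem_union, Finset.mem_image, Finset.mem_filter,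
    Finset.mem_product, Finset.mem_biUnion, Prod.exists]
  grind

lemma isCompletionCQ_entailedCompletion : IsCompletionCQ Ep En (entailedCompletion Ep En O) :=
  ⟨Finset.subset_union_left, fun α hα => by
    rcases mem_entailedCompletion.mp hα with hα | ⟨Q, b, rfl, hQ, hb, -⟩
    · exact Or.inl hα
    · exact Or.inr ⟨Q, b, rfl, hb, hQ⟩⟩

lemma satABox_entailedCompletion {I : Interp} (hIO : I.IsModelOf O)
    (hIA : I.SatABox (NegUnionCQ En)) : I.SatABox (entailedCompletion Ep En O) := by
  intro α hα
  rcases mem_entailedCompletion.mp hα with hα | ⟨Q, b, rfl, -, -, hent⟩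
  · exact hIA α hα
  · exact hent I hIO hIA

lemma exists_model_negUnionCQ (hO : OntologyInLang DL.alci O)
    (hdisj : PairwiseDisjInds ((Ep ∪ En).image Prod.fst))
    (hcons : ∀ e ∈ En, ConsistentWith e.1 O) {e : CQEx} (he : e ∈ En) {I : Interp}
    (hIO : I.IsModelOf O) (hIA : I.SatABox e.1) :
    ∃ K : Interp, K.IsModelOf O ∧ K.SatABox (NegUnionCQ En) ∧
      ∀ a ∈ ABoxInds e.1, ∀ Q, K.indI a ∈ K.concI Q ↔ I.indI a ∈ I.concI Q := by
  rw [← sup_image_fst_eq_negUnionCQ]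
  refine exists_model_sup_of_pairwiseDisjInds
    (hdisj.mono (Finset.image_subset_image Finset.subset_union_right)) hO ?_
    (Finset.mem_image_of_mem _ he) hIO hIA
  simp only [Finset.mem_image]
  rintro _ ⟨e', he', rfl⟩
  exact hcons e' he'

lemma conc_mem_entailedCompletion_of_hom (hO : OntologyInLang DL.alci O)
    (hwfq : ∀ e ∈ Ep ∪ En, CQInds e.2 ⊆ ABoxInds e.1) {e : CQEx} (he : e ∈ Ep)
    (hent : EntailsCQ e.1 O e.2) {h : ℕ → ℕ} (hh : ABoxHom h e.1 (entailedCompletion Ep En O))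
    {Q b : ℕ} (hQb : Atom.catom Q (Term.ind b) ∈ e.2) :
    Assertion.conc Q (h b) ∈ entailedCompletion Ep En O := by
  have hb : b ∈ ABoxInds e.1 := hwfq e (Finset.mem_union_left _ he) (mem_cqInds_of_catom hQb)
  have hentQ : EntailsAQ e.1 O Q b := fun I hIO hIA => (hent I hIO hIA).conc hQb
  refine mem_entailedCompletion.mpr (Or.inr ⟨Q, h b, rfl, ⟨e, he, mem_cqCNs_of_catom hQb⟩,
    isCompletionCQ_entailedCompletion.aboxInds_subset (hh.mem_aboxInds hb), ?_⟩)
  exact fun I hIO hIA => hentQ.of_hom hO hh I hIO (satABox_entailedCompletion hIO hIA)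

lemma exists_conc_not_mem_entailedCompletion (hO : OntologyInLang DL.alci O)
    (hfull : ∀ e ∈ Ep ∪ En, CQIsFull e.2) (hwfq : ∀ e ∈ Ep ∪ En, CQInds e.2 ⊆ ABoxInds e.1)
    (hdisj : PairwiseDisjInds ((Ep ∪ En).image Prod.fst))
    (hnegcons : ∀ e ∈ En, ¬ InconsistentEx e.1 e.2) (hfitn : ∀ e ∈ En, ¬ EntailsCQ e.1 O e.2)
    {e : CQEx} (he : e ∈ En) :
    ∃ Q b, Atom.catom Q (Term.ind b) ∈ e.2 ∧ Assertion.conc Q b ∉ entailedCompletion Ep En O := by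
  obtain ⟨I, hIO, hIA, hIq⟩ : ∃ I : Interp, I.IsModelOf O ∧ I.SatABox e.1 ∧ ¬ I.SatCQ e.2 := by
    simpa [EntailsCQ] using hfitn e he
  obtain ⟨Q, a, hQa, haQ⟩ := exists_conc_not_mem_of_not_satCQ (hnegcons e he)
    (hfull e (Finset.mem_union_right _ he)) hIA hIq
  refine ⟨Q, a, hQa, fun hmem => haQ ?_⟩
  have ha : a ∈ ABoxInds e.1 := hwfq e (Finset.mem_union_right _ he) (mem_cqInds_of_catom hQa)
  -- `K` satisfies the whole completion but agrees with the countermodel `I` on `a`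
  obtain ⟨K, hKO, hKA, hKI⟩ := exists_model_negUnionCQ hO hdisj
    (fun e he => .of_not_entailsCQ (hfitn e he)) he hIO hIA
  exact (hKI a ha Q).mp (satABox_entailedCompletion hKO hKA _ hmem)

lemma not_hom_entailedCompletion_of_inconsistentEx (hO : OntologyInLang DL.alci O)
    (hfull : ∀ e ∈ Ep ∪ En, CQIsFull e.2) (hwfq : ∀ e ∈ Ep ∪ En, CQInds e.2 ⊆ ABoxInds e.1)
    (hdisj : PairwiseDisjInds ((Ep ∪ En).image Prod.fst)) (hfit : FitsCQ O Ep En)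
    {e : CQEx} (he : e ∈ Ep) (hinc : InconsistentEx e.1 e.2) :
    ¬ ∃ h : ℕ → ℕ, ABoxHom h e.1 (entailedCompletion Ep En O) := by
  rintro ⟨h, hh⟩
  rcases En.eq_empty_or_nonempty with rfl | ⟨e₀, he₀⟩
  · -- without negative examples the completion, and hence `e.1`, is empty
    have hA : ABoxInds (NegUnionCQ (∅ : Finset CQEx)) = ∅ := by simp [NegUnionCQ, ABoxInds]
    have hC : ABoxInds (entailedCompletion Ep ∅ O) = ∅ := Finset.subset_empty.mp
      (hA ▸ isCompletionCQ_entailedCompletion.aboxInds_subset)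
    refine not_inconsistentEx_of_aboxInds_eq_empty (hfull e (Finset.mem_union_left _ he))
      (hwfq e (Finset.mem_union_left _ he)) ?_ hinc
    exact Finset.eq_empty_of_forall_notMem fun a ha => by simpa [hC] using hh.mem_aboxInds ha
  · have hcons := fun e he => ConsistentWith.of_not_entailsCQ (hfit.2 e he)
    obtain ⟨I, hIO, hIA⟩ := hcons e₀ he₀
    obtain ⟨K, hKO, hKA, -⟩ := exists_model_negUnionCQ hO hdisj hcons he₀ hIO hIA
    have hC : ConsistentWith (entailedCompletion Ep En O) O :=
      ⟨K, hKO, satABox_entailedCompletion hKO hKA⟩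
    exact hinc O hO (hfit.1 e he) (hC.of_hom hO hh)

end EntailedCompletion

lemma isFittingCompletion_entailedCompletion {Ep En : Finset CQEx} {O : Ontology} {L : DL}
    (hL : OntologyInLang L O) (hfit : FitsCQ O Ep En)
    (hfull : ∀ e ∈ Ep ∪ En, CQIsFull e.2) (hwfq : ∀ e ∈ Ep ∪ En, CQInds e.2 ⊆ ABoxInds e.1)
    (hdisj : PairwiseDisjInds ((Ep ∪ En).image Prod.fst))
    (hnegcons : ∀ e ∈ En, ¬ InconsistentEx e.1 e.2) :
    IsFittingCompletion Ep En (entailedCompletion Ep En O) :=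
  ⟨isCompletionCQ_entailedCompletion,
    fun _ he _ _ hh _ _ hQb =>
      conc_mem_entailedCompletion_of_hom hL.alci hwfq he (hfit.1 _ he) hh hQb,
    fun _ he =>
      exists_conc_not_mem_entailedCompletion hL.alci hfull hwfq hdisj hnegcons hfit.2 he,
    fun _ he hinc =>
      not_hom_entailedCompletion_of_inconsistentEx hL.alci hfull hwfq hdisj hfit he hinc⟩

/-! ## From a completion to a fitting ontology -/

def Concept.bot : Concept := .neg .top

def Concept.or (C D : Concept) : Concept := .neg (.inter (.neg C) (.neg D))

def Concept.orList : List Concept → Concept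
  | [] => .bot
  | C :: l => .or C (Concept.orList l)

@[simp] lemma Interp.cSem_bot (I : Interp) : I.cSem .bot = ∅ := by
  simp [Concept.bot, Interp.cSem]

lemma Interp.mem_cSem_orList (I : Interp) (l : List Concept) (x : I.Dom) :
    x ∈ I.cSem (.orList l) ↔ ∃ C ∈ l, x ∈ I.cSem C := by
  induction l with
  | nil => simp [Concept.orList, Concept.bot, Interp.cSem]
  | cons C l ih =>
      simp only [Concept.orList, Concept.or, Interp.cSem, Set.mem_compl_iff, Set.mem_inter_iff,
        not_and_or, not_not]
      rw [ih]
      simp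

lemma Concept.invFree_orList {l : List Concept} (h : ∀ C ∈ l, C.invFree ∧ C.countFree) :
    (Concept.orList l).invFree ∧ (Concept.orList l).countFree := by
  induction l with
  | nil => simp [Concept.orList, Concept.bot, Concept.invFree, Concept.countFree]
  | cons C l ih =>
      have ih' := ih fun D hD => h D (List.mem_cons_of_mem C hD)
      have hC := h C List.mem_cons_self
      simp only [Concept.orList, Concept.or, Concept.invFree, Concept.countFree]
      exact ⟨⟨hC.1, ih'.1⟩, ⟨hC.2, ih'.2⟩⟩

def AssertionRNs : Assertion → Finset ℕ
  | .conc _ _ => ∅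
  | .role r _ _ => {r}

def ABoxRNs (A : ABox) : Finset ℕ := A.biUnion AssertionRNs

lemma mem_aboxRNs_of_role {A : ABox} {r a b : ℕ} (h : Assertion.role r a b ∈ A) :
    r ∈ ABoxRNs A :=
  Finset.mem_biUnion.mpr ⟨_, h, by simp [AssertionRNs]⟩

def markerCN (Sc : Finset ℕ) (b : ℕ) : ℕ := Sc.sup id + 1 + b

lemma lt_markerCN {Sc : Finset ℕ} {Q : ℕ} (hQ : Q ∈ Sc) (b : ℕ) : Q < markerCN Sc b := by
  have := Finset.le_sup (f := id) hQ
  simp only [markerCN, id] at this ⊢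
  omega

lemma markerCN_injective (Sc : Finset ℕ) : Function.Injective (markerCN Sc) :=
  fun _ _ h => by simpa [markerCN] using h

/-- With `M_b := markerCN Sc b`, the axioms are `⊤ ⊑ ⨆_{b ∈ ind(C)} M_b`, `M_b ⊑ Q` if
`Q(b) ∈ C`, `M_b ⊑ ¬Q` if `Q(b) ∉ C`, and `M_a ⊓ ∃r.M_b ⊑ ⊥` if `r(a, b) ∉ C`,
for `a, b ∈ ind(C)`, `Q ∈ Sc` and `r ∈ Sr`. -/
noncomputable def completionOntology (C : ABox) (Sc Sr : Finset ℕ) : Ontology :=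
  let N := ABoxInds C
  let M : ℕ → Concept := fun b => .atom (markerCN Sc b)
  {(.top, .orList (N.toList.map M))} ∪
    ((N ×ˢ Sc).filter fun p => Assertion.conc p.2 p.1 ∈ C).image
      (fun p => (M p.1, .atom p.2)) ∪
    ((N ×ˢ Sc).filter fun p => Assertion.conc p.2 p.1 ∉ C).image
      (fun p => (M p.1, .neg (.atom p.2))) ∪
    (((N ×ˢ N) ×ˢ Sr).filter fun p => Assertion.role p.2 p.1.1 p.1.2 ∉ C).image
      (fun p => (.inter (M p.1.1) (.ex (.name p.2) (M p.1.2)), .bot))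

lemma ontologyInLang_completionOntology (L : DL) (C : ABox) (Sc Sr : Finset ℕ) :
    OntologyInLang L (completionOntology C Sc Sr) := by
  have hALC : OntologyInLang DL.alc (completionOntology C Sc Sr) := by
    intro ci hci
    simp only [completionOntology, Finset.mem_union, Finset.mem_singleton,
      Finset.mem_image] at hci
    rcases hci with (((rfl | ⟨_, _, rfl⟩) | ⟨_, _, rfl⟩) | ⟨_, _, rfl⟩)
    · exact ⟨trivial, trivial,
        Concept.invFree_orList (by simp [Concept.invFree, Concept.countFree])⟩
    all_goals simp [Concept.bot, Concept.invFree, Concept.countFree]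
  cases L with
  | alc => exact hALC
  | alci => exact hALC.alci

lemma Interp.isModelOf_completionOntology_iff {J : Interp} {C : ABox} {Sc Sr : Finset ℕ} :
    J.IsModelOf (completionOntology C Sc Sr) ↔
      (∀ x, ∃ b ∈ ABoxInds C, x ∈ J.concI (markerCN Sc b)) ∧
      (∀ b ∈ ABoxInds C, ∀ Q ∈ Sc, ∀ x ∈ J.concI (markerCN Sc b),
        (x ∈ J.concI Q ↔ Assertion.conc Q b ∈ C)) ∧
      (∀ a ∈ ABoxInds C, ∀ b ∈ ABoxInds C, ∀ r ∈ Sr, ∀ x ∈ J.concI (markerCN Sc a),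
        ∀ y ∈ J.concI (markerCN Sc b), (x, y) ∈ J.roleI r → Assertion.role r a b ∈ C) := by
  simp only [completionOntology, Interp.isModelOf_union, Interp.isModelOf_image,
    Interp.isModelOf_singleton, Finset.mem_filter, Finset.mem_product, and_imp, Prod.forall,
    Interp.cSem, Interp.rSem, Set.subset_def, Set.mem_ofPred_eq, Set.mem_inter_iff,
    Interp.mem_cSem_orList, Set.mem_compl_iff, Interp.cSem_bot, Set.mem_univ, true_implies,
    List.mem_map, Finset.mem_toList, exists_exists_and_eq_and, Set.mem_empty_iff_false]
  constructor
  · rintro ⟨⟨⟨hcover, hpos⟩, hneg⟩, hrole⟩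
    refine ⟨hcover, fun b hb Q hQ x hx => ⟨fun hxQ => ?_, fun h => hpos b Q hb hQ h x hx⟩,
      fun a ha b hb r hr x hx y hy hxy => ?_⟩
    · by_contra h
      exact hneg b Q hb hQ h x hx hxQ
    · by_contra h
      exact hrole a b r ha hb hr h x hx ⟨y, hxy, hy⟩
  · rintro ⟨hcover, hiff, hrole⟩
    exact ⟨⟨⟨hcover, fun b Q hb hQ h x hx => (hiff b hb Q hQ x hx).mpr h⟩,
      fun b Q hb hQ h x hx hxQ => h ((hiff b hb Q hQ x hx).mp hxQ)⟩,
      fun a b r ha hb hr h x hx ⟨y, hxy, hy⟩ => h (hrole a ha b hb r hr x hx y hy hxy)⟩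

def reprInd (C : ABox) (b₀ n : ℕ) : ℕ := if n ∈ ABoxInds C then n else b₀

lemma reprInd_of_mem {C : ABox} {b₀ n : ℕ} (hn : n ∈ ABoxInds C) : reprInd C b₀ n = n :=
  if_pos hn

lemma reprInd_mem {C : ABox} {b₀ : ℕ} (hb₀ : b₀ ∈ ABoxInds C) (n : ℕ) :
    reprInd C b₀ n ∈ ABoxInds C := by
  unfold reprInd
  split_ifs with hn
  exacts [hn, hb₀]

/-- The ABox `C` as an interpretation, extended by the markers of `completionOntology`;
every element outside `ind(C)` is a copy of `b₀` without role edges. -/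
def canonicalInterp (C : ABox) (Sc : Finset ℕ) (b₀ : ℕ) : Interp where
  Dom := ℕ
  indI := id
  indI_inj := Function.injective_id
  concI Q := {n | Assertion.conc Q (reprInd C b₀ n) ∈ C ∨ Q = markerCN Sc (reprInd C b₀ n)}
  roleI r := {p | Assertion.role r p.1 p.2 ∈ C}

section CanonicalInterp

variable {C : ABox} {Sc : Finset ℕ} {b₀ : ℕ}

lemma canonicalInterp_concI_iff {Q : ℕ} (hQ : Q ∈ Sc) (n : ℕ) :
    n ∈ (canonicalInterp C Sc b₀).concI Q ↔ Assertion.conc Q (reprInd C b₀ n) ∈ C :=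
  or_iff_left (lt_markerCN hQ (reprInd C b₀ n)).ne

lemma canonicalInterp_satABox_of_subset {A : ABox} (hAC : A ⊆ C) :
    (canonicalInterp C Sc b₀).SatABox A := by
  intro α hα
  cases α with
  | conc Q n =>
      refine Or.inl (?_ : Assertion.conc Q (reprInd C b₀ n) ∈ C)
      rw [reprInd_of_mem (mem_aboxInds_of_conc (hAC hα))]
      exact hAC hα
  | role r a b => exact hAC hα

lemma canonicalInterp_isModelOf (hCc : ABoxCNs C ⊆ Sc) (hb₀ : b₀ ∈ ABoxInds C)
    (Sr : Finset ℕ) : (canonicalInterp C Sc b₀).IsModelOf (completionOntology C Sc Sr) := by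
  -- the markers are fresh for the concept names of `C`
  have hmarker : ∀ b n : ℕ, n ∈ (canonicalInterp C Sc b₀).concI (markerCN Sc b) ↔
      b = reprInd C b₀ n := by
    intro b n
    show _ ∨ _ ↔ _
    rw [(markerCN_injective Sc).eq_iff]
    refine ⟨fun h => h.resolve_left fun hC => ?_, Or.inr⟩
    have := lt_markerCN (hCc (mem_aboxCNs_of_conc hC)) b
    omega
  refine Interp.isModelOf_completionOntology_iff.mpr ⟨fun n => ?_, fun b _ Q hQ n hn => ?_,
    fun a _ b _ r _ m hm n hn hmn => ?_⟩
  · exact ⟨reprInd C b₀ n, reprInd_mem hb₀ n, (hmarker _ n).mpr rfl⟩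
  · exact (canonicalInterp_concI_iff hQ n).trans (by rw [← (hmarker b n).mp hn])
  · have hmn' : Assertion.role r m n ∈ C := hmn
    have ha : a = m :=
      ((hmarker a m).mp hm).trans (reprInd_of_mem (mem_aboxInds_of_role_left hmn'))
    have hb : b = n :=
      ((hmarker b n).mp hn).trans (reprInd_of_mem (mem_aboxInds_of_role_right hmn'))
    rwa [ha, hb]

lemma canonicalInterp_not_satCQ {q : CQ} {Q a : ℕ} (hQ : Q ∈ Sc)
    (hQa : Atom.catom Q (Term.ind a) ∈ q) (ha : a ∈ ABoxInds C)
    (haC : Assertion.conc Q a ∉ C) : ¬ (canonicalInterp C Sc b₀).SatCQ q := by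
  intro hq
  have := (canonicalInterp_concI_iff hQ a).mp (hq.conc hQa)
  exact haC (by rwa [reprInd_of_mem ha] at this)

end CanonicalInterp

lemma exists_hom_of_isModelOf_completionOntology {C A : ABox} {Sc Sr : Finset ℕ}
    (hAc : ABoxCNs A ⊆ Sc) (hAr : ABoxRNs A ⊆ Sr) {J : Interp}
    (hJO : J.IsModelOf (completionOntology C Sc Sr)) (hJA : J.SatABox A) :
    ∃ h : ℕ → ℕ, ABoxHom h A C ∧
      ∀ b, ∀ Q ∈ Sc, Assertion.conc Q (h b) ∈ C → J.indI b ∈ J.concI Q := by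
  obtain ⟨hcover, hconc, hrole⟩ := Interp.isModelOf_completionOntology_iff.mp hJO
  -- `h a` is an individual whose marker `J` puts on `a`
  choose h hhC hhM using fun a => hcover (J.indI a)
  refine ⟨h, ⟨fun P a hPa => ?_, fun r a b hr => ?_⟩, fun b Q hQ hQb => ?_⟩
  · exact (hconc _ (hhC a) P (hAc (mem_aboxCNs_of_conc hPa)) _ (hhM a)).mp (hJA _ hPa)
  · exact hrole _ (hhC a) _ (hhC b) r (hAr (mem_aboxRNs_of_role hr)) _ (hhM a) _ (hhM b)
      (hJA _ hr)
  · exact (hconc _ (hhC b) Q hQ _ (hhM b)).mpr hQb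

lemma entailsCQ_completionOntology {C A : ABox} {q : CQ} {Sc Sr : Finset ℕ}
    (hAc : ABoxCNs A ⊆ Sc) (hAr : ABoxRNs A ⊆ Sr) (hqc : CQCNs q ⊆ Sc) (hfull : CQIsFull q)
    (hmap : ¬ InconsistentEx A q → ∀ h : ℕ → ℕ, ABoxHom h A C →
      ∀ Q b, Atom.catom Q (Term.ind b) ∈ q → Assertion.conc Q (h b) ∈ C)
    (hnohom : InconsistentEx A q → ¬ ∃ h : ℕ → ℕ, ABoxHom h A C) :
    EntailsCQ A (completionOntology C Sc Sr) q := by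
  intro J hJO hJA
  obtain ⟨h, hh, hkey⟩ := exists_hom_of_isModelOf_completionOntology hAc hAr hJO hJA
  by_cases hAq : InconsistentEx A q
  · exact absurd ⟨h, hh⟩ (hnohom hAq)
  · exact J.satCQ_of_full hfull
      (fun Q b hQb => hkey b Q (hqc (mem_cqCNs_of_catom hQb)) (hmap hAq h hh Q b hQb))
      (fun r a b hrab => hJA _ (role_mem_of_not_inconsistentEx hAq hrab))

lemma not_entailsCQ_completionOntology {C A : ABox} {q : CQ} {Sc Sr : Finset ℕ}
    (hCc : ABoxCNs C ⊆ Sc) (hAC : A ⊆ C) (hqc : CQCNs q ⊆ Sc) (hqA : CQInds q ⊆ ABoxInds A)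
    (hrefute : ∃ Q b, Atom.catom Q (Term.ind b) ∈ q ∧ Assertion.conc Q b ∉ C) :
    ¬ EntailsCQ A (completionOntology C Sc Sr) q := by
  obtain ⟨Q, a, hQa, haC⟩ := hrefute
  have ha : a ∈ ABoxInds C :=
    Finset.biUnion_subset_biUnion_of_subset_left _ hAC (hqA (mem_cqInds_of_catom hQa))
  exact fun hent => canonicalInterp_not_satCQ (hqc (mem_cqCNs_of_catom hQa)) hQa ha haC
    (hent _ (canonicalInterp_isModelOf hCc ha Sr) (canonicalInterp_satABox_of_subset hAC))

section Signature

variable {Ep En : Finset CQEx}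

def exampleCNs (Ep En : Finset CQEx) : Finset ℕ :=
  (Ep ∪ En).biUnion fun e => ABoxCNs e.1 ∪ CQCNs e.2

def exampleRNs (Ep En : Finset CQEx) : Finset ℕ :=
  (Ep ∪ En).biUnion fun e => ABoxRNs e.1

lemma aboxCNs_subset_exampleCNs {e : CQEx} (he : e ∈ Ep ∪ En) :
    ABoxCNs e.1 ⊆ exampleCNs Ep En :=
  Finset.subset_union_left.trans
    (Finset.subset_biUnion_of_mem (fun e : CQEx => ABoxCNs e.1 ∪ CQCNs e.2) he)

lemma cqCNs_subset_exampleCNs {e : CQEx} (he : e ∈ Ep ∪ En) :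
    CQCNs e.2 ⊆ exampleCNs Ep En :=
  Finset.subset_union_right.trans
    (Finset.subset_biUnion_of_mem (fun e : CQEx => ABoxCNs e.1 ∪ CQCNs e.2) he)

lemma aboxRNs_subset_exampleRNs {e : CQEx} (he : e ∈ Ep ∪ En) :
    ABoxRNs e.1 ⊆ exampleRNs Ep En :=
  Finset.subset_biUnion_of_mem (fun e : CQEx => ABoxRNs e.1) he

lemma IsCompletionCQ.aboxCNs_subset {C : ABox} (hC : IsCompletionCQ Ep En C) :
    ABoxCNs C ⊆ exampleCNs Ep En := by
  intro Q hQ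
  obtain ⟨α, hαC, hQα⟩ := Finset.mem_biUnion.mp hQ
  rcases hC.2 α hαC with hα | ⟨Q', b, rfl, -, e, he, hQe⟩
  · obtain ⟨e, he, hαe⟩ := Finset.mem_sup.mp hα
    exact aboxCNs_subset_exampleCNs (Finset.mem_union_right _ he)
      (Finset.mem_biUnion.mpr ⟨α, hαe, hQα⟩)
  · obtain rfl : Q = Q' := by simpa [AssertionCNs] using hQα
    exact cqCNs_subset_exampleCNs (Finset.mem_union_left _ he) hQe

lemma fitsCQ_completionOntology {C : ABox} (hfull : ∀ e ∈ Ep ∪ En, CQIsFull e.2)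
    (hwfq : ∀ e ∈ Ep ∪ En, CQInds e.2 ⊆ ABoxInds e.1) (hC : IsFittingCompletion Ep En C) :
    FitsCQ (completionOntology C (exampleCNs Ep En) (exampleRNs Ep En)) Ep En := by
  obtain ⟨hcompl, hmap, hrefute, hnohom⟩ := hC
  refine ⟨fun e he => ?_, fun e he => ?_⟩
  · have he' := Finset.mem_union_left En he
    exact entailsCQ_completionOntology (aboxCNs_subset_exampleCNs he')
      (aboxRNs_subset_exampleRNs he') (cqCNs_subset_exampleCNs he') (hfull e he')
      (hmap e he) (hnohom e he)
  · have he' := Finset.mem_union_right Ep he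
    exact not_entailsCQ_completionOntology hcompl.aboxCNs_subset
      ((Finset.le_sup (f := Prod.fst) he).trans hcompl.1) (cqCNs_subset_exampleCNs he')
      (hwfq e he') (hrefute e he)

end Signature

/-- Characterization of fitting existence for ABox-FullCQ
examples (all negative examples consistent) via completions. -/
theorem fullcq_fitting_characterization (L : DL) (Ep En : Finset CQEx)
    (hfull : ∀ e ∈ Ep ∪ En, CQIsFull e.2)
    (hwfq : ∀ e ∈ Ep ∪ En, CQInds e.2 ⊆ ABoxInds e.1)
    (hdisj : PairwiseDisjInds ((Ep ∪ En).image Prod.fst))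
    (hnegcons : ∀ e ∈ En, ¬ InconsistentEx e.1 e.2) :
    (∃ O : Ontology, OntologyInLang L O ∧ FitsCQ O Ep En) ↔
      (∃ C : ABox, IsCompletionCQ Ep En C ∧
        (∀ e ∈ Ep, ¬ InconsistentEx e.1 e.2 →
          ∀ h : ℕ → ℕ, ABoxHom h e.1 C →
            ∀ Q b, Atom.catom Q (Term.ind b) ∈ e.2 →
              Assertion.conc Q (h b) ∈ C) ∧
        (∀ e ∈ En, ∃ Q b, Atom.catom Q (Term.ind b) ∈ e.2 ∧
          Assertion.conc Q b ∉ C) ∧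
        (∀ e ∈ Ep, InconsistentEx e.1 e.2 → ¬ ∃ h : ℕ → ℕ, ABoxHom h e.1 C)) := by
  constructor
  · rintro ⟨O, hL, hfit⟩
    exact ⟨entailedCompletion Ep En O,
      isFittingCompletion_entailedCompletion hL hfit hfull hwfq hdisj hnegcons⟩
  · rintro ⟨C, hC⟩
    exact ⟨completionOntology C (exampleCNs Ep En) (exampleRNs Ep En),
      ontologyInLang_completionOntology L C _ _, fitsCQ_completionOntology hfull hwfq hC⟩

end DLFit
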